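/- arXiv:2504.04267 — 5 statements merged into one kernel-verified Lean document; each statement's English description precedes it below -/
import Mathlib

section
/- For all real p in [0,1], the binary entropy satisfies ln(2)·log₂(p)·log₂(1−p) ≤ H_b(p) ≤ log₂(p)·log₂(1−p), where H_b(p) = p·log₂(1/p) + (1−p)·log₂(1/(1−p)). -/
/-!
Write `L = log p · log (1 - p)` and `I = ∫₀¹ (p ^ s + (1 - p) ^ s) ds`. Since
`log x · ∫₀¹ x ^ s ds = x - 1`, the natural-log entropy is exactly `L · I`, and `L ≥ 0`.
Hence both bounds reduce to `1 ≤ I ≤ 1 / log 2`: the lower one because `x ≤ x ^ s` for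
`x, s ∈ [0, 1]`, the upper one because concavity of `x ↦ x ^ s` gives
`p ^ s + (1 - p) ^ s ≤ 2 · (1/2) ^ s`, whose integral is `1 / log 2`.
-/

noncomputable def binEntropy (p : ℝ) : ℝ :=
  p * Real.logb 2 (1 / p) + (1 - p) * Real.logb 2 (1 / (1 - p))

open intervalIntegral

namespace Real

-- Inside this namespace `binEntropy` is Mathlib's `Real.binEntropy`, measured in nats.

lemma intervalIntegrable_const_rpow {x : ℝ} (hx : 0 < x) (a b : ℝ) :
    IntervalIntegrable (fun s => x ^ s) MeasureTheory.volume a b :=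
  (continuous_const_rpow hx.ne').intervalIntegrable a b

lemma log_mul_integral_rpow {x : ℝ} (hx : 0 < x) : log x * ∫ s in (0 : ℝ)..1, x ^ s = x - 1 := by
  have hderiv : ∀ s ∈ Set.uIcc (0 : ℝ) 1, HasDerivAt (fun s => x ^ s) (x ^ s * log x) s :=
    fun s _ => (hasStrictDerivAt_const_rpow hx s).hasDerivAt
  rw [mul_comm, ← integral_mul_const, integral_eq_sub_of_hasDerivAt hderiv
    ((intervalIntegrable_const_rpow hx 0 1).mul_const _), rpow_one, rpow_zero]

lemma rpow_add_rpow_le_two_mul_rpow_midpoint {a b s : ℝ} (ha : 0 ≤ a) (hb : 0 ≤ b) (hs₀ : 0 ≤ s)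
    (hs₁ : s ≤ 1) : a ^ s + b ^ s ≤ 2 * ((a + b) / 2) ^ s := by
  have h := (concaveOn_rpow hs₀ hs₁).2 (Set.mem_Ici.2 ha) (Set.mem_Ici.2 hb)
    (by norm_num : (0 : ℝ) ≤ 1 / 2) (by norm_num : (0 : ℝ) ≤ 1 / 2) (by norm_num)
  simp only [smul_eq_mul] at h
  rw [show 1 / 2 * a + 1 / 2 * b = (a + b) / 2 by ring] at h
  linarith

variable {p : ℝ}

lemma log_mul_log_one_sub_nonneg (hp : p ∈ Set.Icc (0 : ℝ) 1) : 0 ≤ log p * log (1 - p) :=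
  mul_nonneg_of_nonpos_of_nonpos (log_nonpos hp.1 hp.2)
    (log_nonpos (by linarith [hp.2]) (by linarith [hp.1]))

lemma one_le_integral_rpow_add_rpow_one_sub (hp₀ : 0 < p) (hp₁ : p < 1) :
    1 ≤ ∫ s in (0 : ℝ)..1, (p ^ s + (1 - p) ^ s) := by
  have hq₀ : 0 < 1 - p := by linarith
  have hmono : ∀ s ∈ Set.Icc (0 : ℝ) 1, (1 : ℝ) ≤ p ^ s + (1 - p) ^ s := fun s hs => by
    linarith [self_le_rpow_of_le_one hp₀.le hp₁.le hs.2,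
      self_le_rpow_of_le_one hq₀.le (by linarith) hs.2]
  have hint := (intervalIntegrable_const_rpow hp₀ 0 1).add (intervalIntegrable_const_rpow hq₀ 0 1)
  simpa using integral_mono_on zero_le_one intervalIntegrable_const hint hmono

lemma log_two_mul_integral_rpow_add_rpow_one_sub_le (hp₀ : 0 < p) (hp₁ : p < 1) :
    log 2 * ∫ s in (0 : ℝ)..1, (p ^ s + (1 - p) ^ s) ≤ 1 := by
  have hq₀ : 0 < 1 - p := by linarith
  have hhalf : (0 : ℝ) < 2⁻¹ := by norm_num
  have hconc : ∀ s ∈ Set.Icc (0 : ℝ) 1, p ^ s + (1 - p) ^ s ≤ 2 * (2⁻¹ : ℝ) ^ s := fun s hs => by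
    simpa using rpow_add_rpow_le_two_mul_rpow_midpoint hp₀.le hq₀.le hs.1 hs.2
  have hint := (intervalIntegrable_const_rpow hp₀ 0 1).add (intervalIntegrable_const_rpow hq₀ 0 1)
  have hle := integral_mono_on zero_le_one hint
    ((intervalIntegrable_const_rpow hhalf 0 1).const_mul 2) hconc
  rw [integral_const_mul] at hle
  have hhalf_int := log_mul_integral_rpow hhalf
  rw [log_inv] at hhalf_int
  calc log 2 * ∫ s in (0 : ℝ)..1, (p ^ s + (1 - p) ^ s)
      ≤ log 2 * (2 * ∫ s in (0 : ℝ)..1, (2⁻¹ : ℝ) ^ s) :=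
        mul_le_mul_of_nonneg_left hle (log_pos one_lt_two).le
    _ = 1 := by linear_combination -2 * hhalf_int

lemma binEntropy_eq_log_mul_log_one_sub_mul_integral (hp₀ : 0 < p) (hp₁ : p < 1) :
    binEntropy p = log p * log (1 - p) * ∫ s in (0 : ℝ)..1, (p ^ s + (1 - p) ^ s) := by
  have hq₀ : 0 < 1 - p := by linarith
  rw [integral_add (intervalIntegrable_const_rpow hp₀ 0 1) (intervalIntegrable_const_rpow hq₀ 0 1)]
  have hp := log_mul_integral_rpow hp₀
  have hq := log_mul_integral_rpow hq₀
  simp only [binEntropy, log_inv]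
  linear_combination (-log (1 - p)) * hp - log p * hq

lemma log_mul_log_one_sub_le_binEntropy (hp : p ∈ Set.Icc (0 : ℝ) 1) :
    log p * log (1 - p) ≤ binEntropy p := by
  rcases hp.1.eq_or_lt with rfl | hp₀
  · simp
  rcases hp.2.eq_or_lt with rfl | hp₁
  · simp
  rw [binEntropy_eq_log_mul_log_one_sub_mul_integral hp₀ hp₁]
  exact le_mul_of_one_le_right (log_mul_log_one_sub_nonneg hp)
    (one_le_integral_rpow_add_rpow_one_sub hp₀ hp₁)

lemma log_two_mul_binEntropy_le_log_mul_log_one_sub (hp : p ∈ Set.Icc (0 : ℝ) 1) :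
    log 2 * binEntropy p ≤ log p * log (1 - p) := by
  rcases hp.1.eq_or_lt with rfl | hp₀
  · simp
  rcases hp.2.eq_or_lt with rfl | hp₁
  · simp
  rw [binEntropy_eq_log_mul_log_one_sub_mul_integral hp₀ hp₁, mul_left_comm]
  exact mul_le_of_le_one_right (log_mul_log_one_sub_nonneg hp)
    (log_two_mul_integral_rpow_add_rpow_one_sub_le hp₀ hp₁)

end Real

lemma binEntropy_eq_binEntropy_div_log_two (p : ℝ) :
    binEntropy p = Real.binEntropy p / Real.log 2 := by
  simp only [binEntropy, Real.binEntropy, Real.logb, one_div]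
  ring

theorem topsoe_binary_entropy_bounds :
    ∀ p ∈ Set.Icc (0 : ℝ) 1,
      Real.log 2 * (Real.logb 2 p * Real.logb 2 (1 - p)) ≤ binEntropy p ∧
      binEntropy p ≤ Real.logb 2 p * Real.logb 2 (1 - p) := by
  intro p hp
  have hlog₂ : 0 < Real.log 2 := Real.log_pos one_lt_two
  have hprod : Real.logb 2 p * Real.logb 2 (1 - p) =
      Real.log p * Real.log (1 - p) / Real.log 2 ^ 2 := by
    simp only [Real.logb]
    ring
  rw [hprod, binEntropy_eq_binEntropy_div_log_two]
  constructor
  · rw [pow_two, ← div_div, mul_div_cancel₀ _ hlog₂.ne']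
    exact div_le_div_of_nonneg_right (Real.log_mul_log_one_sub_le_binEntropy hp) hlog₂.le
  · rw [pow_two, ← div_div, div_le_div_iff_of_pos_right hlog₂, le_div_iff₀ hlog₂, mul_comm]
    exact Real.log_two_mul_binEntropy_le_log_mul_log_one_sub hp
end

section
/- For all real x > 0, (1 + 2^x)·log₂(1 + 2^{-x}) < 2, and the function x ↦ (1 + 2^x)·log₂(1 + 2^{-x}) is strictly decreasing on (0, ∞) with value 2 at x = 0. -/
open Real Set

/-!
Substituting `t = 2^(-x)` turns `(1 + 2^x) * logb 2 (1 + 2^(-x))` into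
`(1 + t) * log (1 + t) / (t * log 2)`. As a function of `t` this is strictly increasing on `t > 0`,
its derivative being `(t - log (1 + t)) / (t ^ 2 * log 2) > 0`, and it equals `2` at `t = 1`;
since `x ↦ 2^(-x)` is strictly decreasing with value `1` at `x = 0`, everything follows.
-/

noncomputable def mulLogOneAddDiv (t : ℝ) : ℝ := (1 + t) * log (1 + t) / t

lemma hasDerivAt_mulLogOneAddDiv {t : ℝ} (ht : t ≠ 0) (ht' : 1 + t ≠ 0) :
    HasDerivAt mulLogOneAddDiv ((t - log (1 + t)) / t ^ 2) t := by
  have hlog : HasDerivAt (fun s => log (1 + s)) (1 / (1 + t)) t := by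
    simpa using ((hasDerivAt_id t).const_add 1).log ht'
  have hnum : HasDerivAt (fun s => (1 + s) * log (1 + s)) (log (1 + t) + 1) t := by
    refine (((hasDerivAt_id' t).const_add 1).mul hlog).congr_deriv ?_
    field_simp
  refine (hnum.div (hasDerivAt_id' t) ht).congr_deriv ?_
  ring

lemma strictMonoOn_mulLogOneAddDiv : StrictMonoOn mulLogOneAddDiv (Ioi 0) := by
  apply strictMonoOn_of_deriv_pos (convex_Ioi 0)
  · intro t (ht : 0 < t)
    exact (hasDerivAt_mulLogOneAddDiv ht.ne' (by linarith)).continuousAt.continuousWithinAt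
  · rw [interior_Ioi]
    intro t (ht : 0 < t)
    rw [(hasDerivAt_mulLogOneAddDiv ht.ne' (by linarith)).deriv]
    have : log (1 + t) < t := by
      linarith [log_lt_sub_one_of_pos (by linarith : 0 < 1 + t) (by linarith)]
    exact div_pos (by linarith) (by positivity)

lemma mulLogOneAddDiv_one : mulLogOneAddDiv 1 = 2 * log 2 := by
  norm_num [mulLogOneAddDiv]

lemma one_add_rpow_mul_logb_one_add_rpow_neg {b : ℝ} (hb : 0 < b) (x : ℝ) :
    (1 + b ^ x) * logb b (1 + b ^ (-x)) = mulLogOneAddDiv (b ^ (-x)) / log b := by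
  have hbx : b ^ x ≠ 0 := (rpow_pos_of_pos hb x).ne'
  rw [logb, mulLogOneAddDiv, rpow_neg hb.le]
  field_simp
  ring

theorem aldr_aux_function_bound :
    (∀ x : ℝ, 0 < x → (1 + (2 : ℝ) ^ x) * Real.logb 2 (1 + (2 : ℝ) ^ (-x)) < 2) ∧
    StrictAntiOn (fun x : ℝ => (1 + (2 : ℝ) ^ x) * Real.logb 2 (1 + (2 : ℝ) ^ (-x)))
      (Set.Ioi (0 : ℝ)) ∧
    (1 + (2 : ℝ) ^ (0 : ℝ)) * Real.logb 2 (1 + (2 : ℝ) ^ (-(0 : ℝ))) = 2 := by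
  simp only [one_add_rpow_mul_logb_one_add_rpow_neg two_pos]
  have hlog2 : 0 < log 2 := log_pos one_lt_two
  have hpos (x : ℝ) : (2 : ℝ) ^ (-x) ∈ Ioi 0 := rpow_pos_of_pos two_pos (-x)
  have hanti : StrictAnti fun x : ℝ => (2 : ℝ) ^ (-x) := fun a b hab =>
    rpow_lt_rpow_of_exponent_lt one_lt_two (neg_lt_neg hab)
  refine ⟨fun x hx => ?_, fun a _ b _ hab => ?_, ?_⟩
  · have hlt : (2 : ℝ) ^ (-x) < 1 := by simpa using hanti hx
    rw [div_lt_iff₀ hlog2, ← mulLogOneAddDiv_one]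
    exact strictMonoOn_mulLogOneAddDiv (hpos x) (mem_Ioi.2 one_pos) hlt
  · exact div_lt_div_of_pos_right
      (strictMonoOn_mulLogOneAddDiv (hpos b) (hpos a) (hanti hab)) hlog2
  · rw [neg_zero, rpow_zero, mulLogOneAddDiv_one]
    field_simp
end

section
/- For each integer k ≥ 2, let m = 2^{k−1} + 1 and P_k = ((2^{k−1}−1)/m, 2/m). Then the binary entropy H(P_k) = H_b(2/(2^{k−1}+1)) satisfies H(P_k) < (k−1)/2^{k−4}. -/
open Real in
lemma mul_logb_two_one_div_le {q : ℝ} (hq : 0 ≤ q) (hq1 : q ≤ 1) :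
    q * logb 2 (1 / q) ≤ 2 * (1 - q) := by
  have hlog2 : 1 / 2 ≤ log 2 := by linarith [log_two_gt_d9]
  have hneg : q * logb 2 (1 / q) = negMulLog q / log 2 := by
    rw [negMulLog, logb, one_div, log_inv]
    ring
  rw [hneg, div_le_iff₀ (by positivity)]
  nlinarith [negMulLog_le_one_sub_self hq, mul_le_mul_of_nonneg_left hlog2 (sub_nonneg.2 hq1)]

theorem binEntropy_le_mul_logb_add_two {p x : ℝ} (hp : 0 < p) (hp1 : p ≤ 1) (hx : 1 / p ≤ x) :
    binEntropy p ≤ p * (Real.logb 2 x + 2) := by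
  have hfirst : p * Real.logb 2 (1 / p) ≤ p * Real.logb 2 x :=
    mul_le_mul_of_nonneg_left (Real.logb_le_logb_of_le one_lt_two (by positivity) hx) hp.le
  have hsecond := mul_logb_two_one_div_le (sub_nonneg.2 hp1) (by linarith)
  rw [binEntropy]
  linarith

theorem entropy_Pk_bound (k : ℕ) (hk : 2 ≤ k) :
    binEntropy (2 / ((2 : ℝ) ^ ((k : ℤ) - 1) + 1))
      < ((k : ℝ) - 1) / (2 : ℝ) ^ ((k : ℤ) - 4) := by
  set y : ℝ := (2 : ℝ) ^ ((k : ℤ) - 1) with hy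
  have hk2 : (2 : ℝ) ≤ k := by exact_mod_cast hk
  have hy2 : 2 ≤ y := by
    simpa using zpow_le_zpow_right₀ (a := (2 : ℝ)) one_le_two (show (1 : ℤ) ≤ k - 1 by omega)
  have hlogy : Real.logb 2 y = k - 1 := by
    rw [hy, ← Real.rpow_intCast, Real.logb_rpow two_pos (by norm_num)]
    push_cast
    ring
  have hRHS : (2 : ℝ) ^ ((k : ℤ) - 4) = y / 8 := by
    rw [show (k : ℤ) - 4 = ((k : ℤ) - 1) + (-3) by ring, zpow_add₀ two_ne_zero]
    norm_num
    ring
  have hH := binEntropy_le_mul_logb_add_two (p := 2 / (y + 1)) (x := y) (by positivity)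
    ((div_le_one (by positivity)).2 (by linarith)) (by rw [one_div_div]; linarith)
  rw [hlogy] at hH
  rw [hRHS]
  refine hH.trans_lt ?_
  rw [div_div_eq_mul_div, div_mul_eq_mul_div, div_lt_div_iff₀ (by positivity) (by positivity)]
  nlinarith
end

section
/- Let m be a positive integer with 2^{k−1} < m ≤ 2^k and let K ≥ k. Then the ALDR rejection probability q_{K,0} = (2^K − m·⌊2^K/m⌋)/2^K satisfies q_{K,0} < 1/(2^{K−k} + 1). -/
/-! The numerator is `r = 2^K mod m`. Since `m ≤ 2^k`, the quotient `q = ⌊2^K/m⌋` is at least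
`2^(K-k)`, and `r < m` gives `r · 2^(K-k) < m q`, so `r (2^(K-k) + 1) < m q + r = 2^K`. -/

theorem Nat.mod_mul_add_one_lt {n m c : ℕ} (hm : 0 < m) (hc : 0 < c) (hcm : c * m ≤ n) :
    n % m * (c + 1) < n := by
  have hquot : c ≤ n / m := (Nat.le_div_iff_mul_le hm).2 hcm
  have hrem : n % m * c < m * (n / m) :=
    calc n % m * c < m * c := Nat.mul_lt_mul_of_pos_right (Nat.mod_lt n hm) hc
      _ ≤ m * (n / m) := Nat.mul_le_mul_left m hquot
  calc n % m * (c + 1) = n % m * c + n % m := by ring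
    _ < m * (n / m) + n % m := Nat.add_lt_add_right hrem _
    _ = n := Nat.div_add_mod n m

theorem Nat.two_pow_sub_mul_le_two_pow {m k K : ℕ} (hm : m ≤ 2 ^ k) (hK : k ≤ K) :
    2 ^ (K - k) * m ≤ 2 ^ K :=
  calc 2 ^ (K - k) * m ≤ 2 ^ (K - k) * 2 ^ k := Nat.mul_le_mul_left _ hm
    _ = 2 ^ K := by rw [← pow_add, Nat.sub_add_cancel hK]

theorem aldr_rejection_probability_bound_general (m k K : ℕ) (hm : 0 < m)
    (hhigh : m ≤ 2 ^ k) (hK : k ≤ K) :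
    (((2 ^ K - m * (2 ^ K / m) : ℕ) : ℝ)) / 2 ^ K < 1 / ((2 : ℝ) ^ (K - k) + 1) := by
  have key : 2 ^ K % m * (2 ^ (K - k) + 1) < 2 ^ K :=
    Nat.mod_mul_add_one_lt hm (Nat.two_pow_pos _) (Nat.two_pow_sub_mul_le_two_pow hhigh hK)
  rw [← Nat.mod_def, div_lt_div_iff₀ (by positivity) (by positivity), one_mul]
  exact_mod_cast key

theorem aldr_rejection_probability_bound (m k K : ℕ) (hm : 0 < m)
    (hlow : 2 ^ (k - 1) < m) (hhigh : m ≤ 2 ^ k) (hK : k ≤ K) :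
    (((2 ^ K - m * (2 ^ K / m) : ℕ) : ℝ)) / 2 ^ K < 1 / ((2 : ℝ) ^ (K - k) + 1) :=
  aldr_rejection_probability_bound_general m k K hm hhigh hK
end

section
/- Suppose m is a positive integer, k = ⌈log₂ m⌉, and K ≥ k + log₂(m/(2^k − m)) (with m < 2^k). Then ⌊2^K/m⌋ > 2^{K−k}; conversely if K < k + log₂(m/(2^k−m)) then ⌊2^K/m⌋ = 2^{K−k}. In particular, for m ≠ 2^k, ⌊2^K/m⌋ > 2^{K−k} holds for all K ≥ 2k. -/
/-!
Write `d = 2^k - m > 0`. Since `2^K = (m + d) 2^(K-k)`, division by `m` gives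
`⌊2^K/m⌋ = 2^(K-k) + ⌊d 2^(K-k)/m⌋`, so the quotient exceeds `2^(K-k)` exactly when
`m ≤ d 2^(K-k)`, which after taking `log₂` is the condition `K ≥ k + log₂(m/d)`.
For `K ≥ 2k` it holds because `m < 2^k ≤ 2^(K-k)`.
-/

namespace Nat

theorem add_mul_div_eq_add_div {m : ℕ} (hm : 0 < m) (d q : ℕ) :
    (m + d) * q / m = q + d * q / m := by
  rw [add_mul, add_comm (m * q), Nat.add_mul_div_left _ _ hm, add_comm]

theorem lt_add_mul_div_iff {m : ℕ} (hm : 0 < m) (d q : ℕ) :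
    q < (m + d) * q / m ↔ m ≤ d * q := by
  rw [add_mul_div_eq_add_div hm, lt_add_iff_pos_right, Nat.div_pos_iff]
  exact and_iff_right hm

theorem add_mul_div_eq_iff {m : ℕ} (hm : 0 < m) (d q : ℕ) :
    (m + d) * q / m = q ↔ d * q < m := by
  rw [add_mul_div_eq_add_div hm, add_eq_left, Nat.div_eq_zero_iff_lt hm]

end Nat

theorem add_logb_two_div_le_iff {m d k K : ℕ} (hm : 0 < m) (hd : 0 < d) (hK : k ≤ K) :
    (k : ℝ) + Real.logb 2 ((m : ℝ) / d) ≤ K ↔ m ≤ d * 2 ^ (K - k) := by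
  have hmd : (0 : ℝ) < (m : ℝ) / d := by positivity
  rw [← le_sub_iff_add_le', ← Nat.cast_sub hK,
    Real.logb_le_iff_le_rpow one_lt_two hmd, Real.rpow_natCast,
    div_le_iff₀ (by exact_mod_cast hd), mul_comm]
  exact_mod_cast Iff.rfl

theorem aldr_min_depth (m k K : ℕ)
    (hlow : 2 ^ (k - 1) < m) (hhigh : m < 2 ^ k) (hK : k ≤ K) :
    (((k : ℝ) + Real.logb 2 ((m : ℝ) / ((2 : ℝ) ^ k - m)) ≤ (K : ℝ)) →
        2 ^ (K - k) < 2 ^ K / m) ∧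
    (((K : ℝ) < (k : ℝ) + Real.logb 2 ((m : ℝ) / ((2 : ℝ) ^ k - m))) →
        2 ^ K / m = 2 ^ (K - k)) ∧
    (2 * k ≤ K → 2 ^ (K - k) < 2 ^ K / m) := by
  have hm : 0 < m := (Nat.two_pow_pos _).trans hlow
  set d := 2 ^ k - m
  have hd : 0 < d := Nat.sub_pos_of_lt hhigh
  have hdR : (2 : ℝ) ^ k - m = d := by rw [Nat.cast_sub hhigh.le]; push_cast; rfl
  have hsplit : 2 ^ K = (m + d) * 2 ^ (K - k) := by
    rw [Nat.add_sub_cancel' hhigh.le, ← pow_add, Nat.add_sub_cancel' hK]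
  rw [hdR, hsplit, Nat.lt_add_mul_div_iff hm, Nat.add_mul_div_eq_iff hm,
    add_logb_two_div_le_iff hm hd hK, ← not_le, add_logb_two_div_le_iff hm hd hK, not_le]
  refine ⟨id, id, fun h2k => ?_⟩
  calc m ≤ 2 ^ k := hhigh.le
    _ ≤ 2 ^ (K - k) := Nat.pow_le_pow_right two_pos (by omega)
    _ ≤ d * 2 ^ (K - k) := Nat.le_mul_of_pos_left _ hd
end
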